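/- For i, j ∈ 𝒫 ∪ {0}: if it is not the case that i = 0 and j ∈ 𝒫, then every short exact sequence 0 → Δ(i) → E → Δ(j) → 0 of finite-dimensional left R-modules splits; whereas for every j ∈ 𝒫 the short exact sequence 0 → K·E_{n+1,j} → Re_j → Δ(j) → 0 is non-split and its kernel K·E_{n+1,j} is isomorphic to Δ(0) (so there is a non-split extension of Δ(j) by Δ(0)). -/

import Mathlib

open Matrix

set_option synthInstance.maxHeartbeats 1000000
set_option maxHeartbeats 2000000

/-- A finite poset structure on `{1,…,n}` (modeled as `Fin n`) whose order
relation refines the natural linear order. -/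
structure PosetOn (n : ℕ) where
  le : Fin n → Fin n → Prop
  le_refl : ∀ i, le i i
  le_trans : ∀ {i j k : Fin n}, le i j → le j k → le i k
  le_compat : ∀ {i j : Fin n}, le i j → i ≤ j

/-- The incidence algebra `K𝒫` as a set of `n × n` matrices. -/
def KPset (K : Type) [Field K] {n : ℕ} (P : PosetOn n) : Set (Matrix (Fin n) (Fin n) K) :=
  {M | ∀ j i, M j i ≠ 0 → P.le i j}

/-- The matrix model of the right Burt–Butler algebra: `(n+1) × (n+1)` matrices (indexed by
`Fin n ⊕ Unit`) whose upper-left `n × n` block is in `K𝒫` and upper-right block is zero. -/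
def RSet (K : Type) [Field K] {n : ℕ} (P : PosetOn n) :
    Set (Matrix (Fin n ⊕ Unit) (Fin n ⊕ Unit) K) :=
  {X | X.toBlocks₁₁ ∈ KPset K P ∧ X.toBlocks₁₂ = 0}

section GenericModules

variable {K : Type} [Field K] {A : Type} [Ring A] [Algebra K A] (e f : A)

/-- The left ideal `A e = {y ∈ A : y e = y}` (for `e` idempotent), as an `A`-submodule. -/
def leftIdeal (A : Type) [Ring A] (e : A) : Submodule A A where
  carrier := {y | y * e = y}
  add_mem' := by intro a b ha hb; show (a + b) * e = a + b; rw [add_mul, ha, hb]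
  zero_mem' := zero_mul e
  smul_mem' := by intro r y hy; show (r • y) * e = r • y; rw [smul_eq_mul, mul_assoc, hy]

/-- The cyclic submodule of `leftIdeal A e` generated by (elements equal to) `f`. -/
def cycSub (A : Type) [Ring A] (e f : A) : Submodule A ↥(leftIdeal A e) :=
  Submodule.span A {y : ↥(leftIdeal A e) | (y : A) = f}

/-- The quotient `(A e) / (A f)`; for the right Burt–Butler algebra this realizes the
standard modules `Δ(k) = Re_k / K·E_{n+1,k}`. -/
def DeltaGen (A : Type) [Ring A] (e f : A) : Type :=
  ↥(leftIdeal A e) ⧸ cycSub A e f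

noncomputable instance : AddCommGroup (DeltaGen A e f) :=
  inferInstanceAs (AddCommGroup (↥(leftIdeal A e) ⧸ cycSub A e f))

noncomputable instance : Module A (DeltaGen A e f) :=
  inferInstanceAs (Module A (↥(leftIdeal A e) ⧸ cycSub A e f))

noncomputable instance : Module K (DeltaGen A e f) :=
  inferInstanceAs (Module K (↥(leftIdeal A e) ⧸ cycSub A e f))

noncomputable instance : SMulCommClass A K (DeltaGen A e f) :=
  inferInstanceAs (SMulCommClass A K (↥(leftIdeal A e) ⧸ cycSub A e f))

/-- The canonical quotient map `Ae → (Ae)/(Af)`. -/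
noncomputable def deltaQuot (A : Type) [Ring A] (e f : A) :
    ↥(leftIdeal A e) →ₗ[A] DeltaGen A e f :=
  (cycSub A e f).mkQ

/-- The canonical inclusion of the cyclic submodule into `Ae`. -/
def cycInc (A : Type) [Ring A] (e f : A) : ↥(cycSub A e f) →ₗ[A] ↥(leftIdeal A e) :=
  (cycSub A e f).subtype

end GenericModules

/-! Write `f = E_{n+1,k}`, so that `Δ(k) = Re_k / Rf`. The projective module `Δ(0) = Re₀` makes
every sequence ending in it split. The idempotent `e₀` kills every `Δ(i)` and satisfies `e₀ f = f`,
so in an extension of `Δ(k)` by `Δ(i)` a lift `x` of `ē_k` has `f x = e₀ f x = 0`, and `ē_k ↦ x`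
is a section. The sequence `Rf → Re_k → Δ(k)` does not split because `f R f = 0` (the upper-right
block of `R` vanishes): a section sends `ē_k` to some `e_k + r f`, which `f` does not kill.
Right multiplication by `f` is an isomorphism `Re₀ ≅ Rf`. -/

open Submodule

section StandardModules

variable {A : Type} [Ring A] {e f g : A}

lemma cycSub_eq_span_singleton (hfe : f * e = f) :
    cycSub A e f = A ∙ (⟨f, hfe⟩ : leftIdeal A e) := by
  unfold cycSub
  congr 1
  ext y
  simp [Subtype.ext_iff]

lemma mem_cycSub_iff (hfe : f * e = f) {y : leftIdeal A e} :
    y ∈ cycSub A e f ↔ ∃ r : A, r * f = y := by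
  simp [cycSub_eq_span_singleton hfe, mem_span_singleton, Subtype.ext_iff]

lemma deltaQuot_surjective : Function.Surjective (deltaQuot A e f) :=
  (cycSub A e f).mkQ_surjective

lemma deltaQuot_eq_zero_iff {y : leftIdeal A e} : deltaQuot A e f y = 0 ↔ y ∈ cycSub A e f :=
  Submodule.Quotient.mk_eq_zero _

lemma range_cycInc : LinearMap.range (cycInc A e f) = LinearMap.ker (deltaQuot A e f) :=
  (range_subtype _).trans (ker_mkQ _).symm

lemma smul_deltaQuot_generator_eq_zero (he : IsIdempotentElem e) (hfe : f * e = f) :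
    f • deltaQuot A e f ⟨e, he⟩ = 0 := by
  rw [← map_smul, deltaQuot_eq_zero_iff, mem_cycSub_iff hfe]
  exact ⟨1, by simp [hfe]⟩

lemma DeltaGen.smul_eq_zero (hfe : f * e = f) (hg : ∀ y ∈ leftIdeal A e, ∃ r : A, g * y = r * f)
    (v : DeltaGen A e f) : g • v = 0 := by
  obtain ⟨⟨y, hy⟩, rfl⟩ := deltaQuot_surjective v
  obtain ⟨r, hr⟩ := hg y hy
  rw [← map_smul, deltaQuot_eq_zero_iff, mem_cycSub_iff hfe]
  exact ⟨r, hr.symm⟩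

end StandardModules

section Splitting

variable {A : Type} [Ring A] {e f g : A} {M E : Type} [AddCommGroup M] [Module A M]
  [AddCommGroup E] [Module A E]

theorem leftIdeal.exists_section_of_surjective (he : IsIdempotentElem e)
    {π : E →ₗ[A] leftIdeal A e} (hπ : Function.Surjective π) :
    ∃ s : leftIdeal A e →ₗ[A] E, π ∘ₗ s = LinearMap.id := by
  obtain ⟨x, hx⟩ := hπ ⟨e, he⟩
  refine ⟨LinearMap.toSpanSingleton A E x ∘ₗ (leftIdeal A e).subtype, ?_⟩
  ext ⟨y, hy⟩
  simp only [LinearMap.comp_apply, subtype_apply, LinearMap.toSpanSingleton_apply, map_smul, hx,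
    LinearMap.id_apply]
  exact hy

theorem DeltaGen.exists_section_of_smul_eq_zero (he : IsIdempotentElem e) (hfe : f * e = f)
    (hgf : g * f = f) (hM : ∀ m : M, g • m = 0) {ι : M →ₗ[A] E} {π : E →ₗ[A] DeltaGen A e f}
    (hπ : Function.Surjective π) (hexact : LinearMap.range ι = LinearMap.ker π) :
    ∃ s : DeltaGen A e f →ₗ[A] E, π ∘ₗ s = LinearMap.id := by
  obtain ⟨x, hx⟩ := hπ (deltaQuot A e f ⟨e, he⟩)
  have hfx : f • x = 0 := by
    have hker : f • x ∈ LinearMap.ker π := by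
      rw [LinearMap.mem_ker, map_smul, hx, smul_deltaQuot_generator_eq_zero he hfe]
    rw [← hexact] at hker
    obtain ⟨m, hm⟩ := hker
    rw [← hgf, mul_smul, ← hm, ← map_smul, hM, map_zero]
  let σ := LinearMap.toSpanSingleton A E x ∘ₗ (leftIdeal A e).subtype
  have hσ : cycSub A e f ≤ LinearMap.ker σ := by
    intro y hy
    obtain ⟨r, hr⟩ := (mem_cycSub_iff hfe).1 hy
    simp [σ, ← hr, mul_smul, hfx]
  refine ⟨(cycSub A e f).liftQ σ hσ, ?_⟩
  ext ⟨y, hy⟩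
  show π (y • x) = deltaQuot A e f ⟨y, hy⟩
  rw [map_smul, hx, ← map_smul]
  exact congrArg _ (Subtype.ext hy)

theorem deltaQuot_not_split (he : IsIdempotentElem e) (hfe : f * e = f) (hf : f ≠ 0)
    (hfAf : ∀ r : A, f * r * f = 0) :
    ¬ ∃ s : DeltaGen A e f →ₗ[A] leftIdeal A e, deltaQuot A e f ∘ₗ s = LinearMap.id := by
  rintro ⟨s, hs⟩
  set z := s (deltaQuot A e f ⟨e, he⟩)
  have hfz : f * (z : A) = 0 := by
    have : f • z = 0 := by rw [← map_smul, smul_deltaQuot_generator_eq_zero he hfe, map_zero]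
    simpa using congrArg Subtype.val this
  have hz : z - ⟨e, he⟩ ∈ cycSub A e f := by
    rw [← deltaQuot_eq_zero_iff, map_sub, ← LinearMap.comp_apply, hs, LinearMap.id_apply, sub_self]
  obtain ⟨r, hr⟩ := (mem_cycSub_iff hfe).1 hz
  have : f * (z : A) = f := by
    rw [show (z : A) = e + r * f by simp [hr], mul_add, hfe, ← mul_assoc, hfAf, add_zero]
  exact hf (this.symm.trans hfz)

end Splitting

section KernelIso

variable {A : Type} [Ring A] {e f g : A}

noncomputable def leftIdealToCycSub (hfe : f * e = f) : leftIdeal A g →ₗ[A] cycSub A e f :=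
  LinearMap.codRestrict (cycSub A e f)
    (LinearMap.toSpanSingleton A _ ⟨f, hfe⟩ ∘ₗ (leftIdeal A g).subtype)
    (fun z => (mem_cycSub_iff hfe).2 ⟨z, rfl⟩)

lemma leftIdealToCycSub_bijective (hg : IsIdempotentElem g) (hfe : f * e = f) (hgf : g * f = f)
    (hinj : ∀ z ∈ leftIdeal A g, z * f = 0 → z = 0) :
    Function.Bijective (leftIdealToCycSub (g := g) hfe) := by
  refine ⟨(injective_iff_map_eq_zero _).2 fun ⟨z, hz⟩ h0 => ?_, fun ⟨w, hw⟩ => ?_⟩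
  · have : z * f = 0 := by simpa [leftIdealToCycSub, Subtype.ext_iff] using h0
    exact Subtype.ext (hinj z hz this)
  · obtain ⟨r, hr⟩ := (mem_cycSub_iff hfe).1 hw
    refine ⟨⟨r * g, show r * g * g = r * g by rw [mul_assoc, hg.eq]⟩, ?_⟩
    ext
    simp [leftIdealToCycSub, mul_assoc, hgf, hr]

end KernelIso

namespace Matrix

variable {l m α : Type} [Fintype l] [Fintype m] [DecidableEq l] [DecidableEq m] [Semiring α]

lemma single_mul_eq_of_mul_single_eq_self {Y : Matrix l m α} {b : m}
    (hY : Y * single b b (1 : α) = Y) (a : l) : single a a (1 : α) * Y = single a b (Y a b) := by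
  ext p q
  by_cases hp : p = a
  · subst hp
    by_cases hq : q = b
    · subst hq; simp
    · rw [single_mul_apply_same, one_mul, single_apply_of_col_ne _ _ (Ne.symm hq), ← hY,
        mul_single_apply_of_ne _ _ _ _ _ hq]
  · rw [single_mul_apply_of_ne _ _ _ _ _ hp, single_apply_of_row_ne (Ne.symm hp)]

omit [Fintype l] [DecidableEq l] in
lemma eq_zero_of_mul_single_eq_zero {Z : Matrix l m α} {a b : m}
    (hZ : Z * single a a (1 : α) = Z) (h : Z * single a b (1 : α) = 0) : Z = 0 := by
  ext p q
  by_cases hq : q = a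
  · subst hq; simpa using congrFun (congrFun h p) b
  · rw [← hZ, mul_single_apply_of_ne _ _ _ _ _ hq, zero_apply]

end Matrix

lemma RSet.apply_inl_inr {K : Type} [Field K] {n : ℕ} {P : PosetOn n}
    {X : Matrix (Fin n ⊕ Unit) (Fin n ⊕ Unit) K} (hX : X ∈ RSet K P) (a : Fin n) :
    X (Sum.inl a) (Sum.inr ()) = 0 :=
  congrFun (congrFun hX.2 a) ()

namespace Subalgebra

open Matrix

variable {K ι : Type} [CommSemiring K] [Fintype ι] [DecidableEq ι] {R : Subalgebra K (Matrix ι ι K)}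

lemma mul_eq_of_coe_eq_single {x y z : R} {a b c : ι} (hx : (x : Matrix ι ι K) = single a b 1)
    (hy : (y : Matrix ι ι K) = single b c 1) (hz : (z : Matrix ι ι K) = single a c 1) :
    x * y = z :=
  Subtype.ext <| by rw [Subalgebra.coe_mul, hx, hy, hz, single_mul_single_same, one_mul]

lemma ne_zero_of_coe_eq_single [Nontrivial K] {x : R} {a b : ι}
    (hx : (x : Matrix ι ι K) = single a b 1) : x ≠ 0 := by
  rintro rfl
  simpa using congrFun (congrFun hx a) b

end Subalgebra

section BurtButler

open Matrix

variable {K : Type} [Field K] {n : ℕ} {R : Subalgebra K (Matrix (Fin n ⊕ Unit) (Fin n ⊕ Unit) K)}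
  {e0 ek Ek : R} {k : Fin n}

local notation "𝕄" => Matrix (Fin n ⊕ Unit) (Fin n ⊕ Unit) K

lemma exists_mul_eq_mul_of_mem_leftIdeal
    (he0 : (e0 : 𝕄) = single (Sum.inr ()) (Sum.inr ()) 1)
    (hek : (ek : 𝕄) = single (Sum.inl k) (Sum.inl k) 1)
    (hEk : (Ek : 𝕄) = single (Sum.inr ()) (Sum.inl k) 1)
    {y : R} (hy : y ∈ leftIdeal R ek) : ∃ r : R, e0 * y = r * Ek := by
  refine ⟨algebraMap K R ((y : 𝕄) (Sum.inr ()) (Sum.inl k)), Subtype.ext ?_⟩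
  have hcol : (y : 𝕄) * single (Sum.inl k : Fin n ⊕ Unit) (Sum.inl k) (1 : K) = (y : 𝕄) := by
    rw [← hek, ← Subalgebra.coe_mul, hy]
  rw [Subalgebra.coe_mul, Subalgebra.coe_mul, he0, single_mul_eq_of_mul_single_eq_self hcol,
    Subalgebra.coe_algebraMap, ← Algebra.smul_def, hEk, smul_single, smul_eq_mul, mul_one]

lemma mul_mul_eq_zero_of_coe_eq_single {P : PosetOn n} (hR : (R : Set 𝕄) = RSet K P)
    (hEk : (Ek : 𝕄) = single (Sum.inr ()) (Sum.inl k) 1) (r : R) : Ek * r * Ek = 0 := by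
  have hr : (r : 𝕄) ∈ RSet K P := hR ▸ r.2
  refine Subtype.ext ?_
  rw [Subalgebra.coe_mul, Subalgebra.coe_mul, hEk, single_mul_mul_single, RSet.apply_inl_inr hr,
    mul_zero, zero_mul, single_zero, ZeroMemClass.coe_zero]

lemma eq_zero_of_mem_leftIdeal_of_mul_eq_zero
    (he0 : (e0 : 𝕄) = single (Sum.inr ()) (Sum.inr ()) 1)
    (hEk : (Ek : 𝕄) = single (Sum.inr ()) (Sum.inl k) 1)
    {z : R} (hz : z ∈ leftIdeal R e0) (hzE : z * Ek = 0) : z = 0 := by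
  refine Subtype.ext (eq_zero_of_mul_single_eq_zero (a := Sum.inr ()) (b := Sum.inl k) ?_ ?_)
  · rw [← he0, ← Subalgebra.coe_mul, hz]
  · rw [← hEk, ← Subalgebra.coe_mul, hzE, ZeroMemClass.coe_zero]

end BurtButler

theorem stmt18_general {K : Type} [Field K] {n : ℕ} (P : PosetOn n)
    (R : Subalgebra K (Matrix (Fin n ⊕ Unit) (Fin n ⊕ Unit) K))
    (hR : (R : Set (Matrix (Fin n ⊕ Unit) (Fin n ⊕ Unit) K)) = RSet K P)
    (e0 : R) (he0 : (e0 : Matrix (Fin n ⊕ Unit) (Fin n ⊕ Unit) K)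
      = Matrix.single (Sum.inr ()) (Sum.inr ()) 1)
    (ee : Fin n → R) (hee : ∀ k, (ee k : Matrix (Fin n ⊕ Unit) (Fin n ⊕ Unit) K)
      = Matrix.single (Sum.inl k) (Sum.inl k) 1)
    (EE : Fin n → R) (hEE : ∀ k, (EE k : Matrix (Fin n ⊕ Unit) (Fin n ⊕ Unit) K)
      = Matrix.single (Sum.inr ()) (Sum.inl k) 1) :
    -- every short exact sequence `0 → Δ(i) → E → Δ(j) → 0` with `i, j ∈ 𝒫` splits
    (∀ i j : Fin n, ∀ (E : Type) (_ : AddCommGroup E) (_ : Module K E) (_ : Module R E)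
      (_ : IsScalarTower K R E) (_ : FiniteDimensional K E)
      (ι : DeltaGen R (ee i) (EE i) →ₗ[R] E) (π : E →ₗ[R] DeltaGen R (ee j) (EE j)),
      Function.Injective ι → Function.Surjective π → LinearMap.range ι = LinearMap.ker π →
      ∃ s : DeltaGen R (ee j) (EE j) →ₗ[R] E, π ∘ₗ s = LinearMap.id) ∧
    -- every short exact sequence `0 → Δ(i) → E → Δ(0) → 0` with `i ∈ 𝒫` splits
    (∀ i : Fin n, ∀ (E : Type) (_ : AddCommGroup E) (_ : Module K E) (_ : Module R E)
      (_ : IsScalarTower K R E) (_ : FiniteDimensional K E)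
      (ι : DeltaGen R (ee i) (EE i) →ₗ[R] E) (π : E →ₗ[R] ↥(leftIdeal R e0)),
      Function.Injective ι → Function.Surjective π → LinearMap.range ι = LinearMap.ker π →
      ∃ s : ↥(leftIdeal R e0) →ₗ[R] E, π ∘ₗ s = LinearMap.id) ∧
    -- every short exact sequence `0 → Δ(0) → E → Δ(0) → 0` splits
    (∀ (E : Type) (_ : AddCommGroup E) (_ : Module K E) (_ : Module R E)
      (_ : IsScalarTower K R E) (_ : FiniteDimensional K E)
      (ι : ↥(leftIdeal R e0) →ₗ[R] E) (π : E →ₗ[R] ↥(leftIdeal R e0)),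
      Function.Injective ι → Function.Surjective π → LinearMap.range ι = LinearMap.ker π →
      ∃ s : ↥(leftIdeal R e0) →ₗ[R] E, π ∘ₗ s = LinearMap.id) ∧
    -- for `j ∈ 𝒫` the sequence `0 → K·E_{n+1,j} → Re_j → Δ(j) → 0` is exact and non-split,
    -- with kernel isomorphic to `Δ(0) = Re₀`
    (∀ j : Fin n,
      Function.Injective (cycInc R (ee j) (EE j)) ∧
      Function.Surjective (deltaQuot R (ee j) (EE j)) ∧
      LinearMap.range (cycInc R (ee j) (EE j))
        = LinearMap.ker (deltaQuot R (ee j) (EE j)) ∧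
      (¬ ∃ s : DeltaGen R (ee j) (EE j) →ₗ[R] ↥(leftIdeal R (ee j)),
        deltaQuot R (ee j) (EE j) ∘ₗ s = LinearMap.id) ∧
      Nonempty (↥(cycSub R (ee j) (EE j)) ≃ₗ[R] ↥(leftIdeal R e0))) := by
  have he0_idem : IsIdempotentElem e0 := Subalgebra.mul_eq_of_coe_eq_single he0 he0 he0
  have hee_idem (k : Fin n) : IsIdempotentElem (ee k) :=
    Subalgebra.mul_eq_of_coe_eq_single (hee k) (hee k) (hee k)
  have hEE_ee (k : Fin n) : EE k * ee k = EE k :=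
    Subalgebra.mul_eq_of_coe_eq_single (hEE k) (hee k) (hEE k)
  have he0_EE (k : Fin n) : e0 * EE k = EE k :=
    Subalgebra.mul_eq_of_coe_eq_single he0 (hEE k) (hEE k)
  have he0_smul_Δ (k : Fin n) (v : DeltaGen R (ee k) (EE k)) : e0 • v = 0 :=
    DeltaGen.smul_eq_zero (hEE_ee k)
      (fun _ hy => exists_mul_eq_mul_of_mem_leftIdeal he0 (hee k) (hEE k) hy) v
  refine ⟨fun i j _ _ _ _ _ _ _ π _ hπ hexact => ?_, fun _ _ _ _ _ _ _ _ π _ hπ _ => ?_,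
    fun _ _ _ _ _ _ _ π _ hπ _ => ?_, fun j => ⟨?_, ?_, ?_, ?_, ?_⟩⟩
  · exact DeltaGen.exists_section_of_smul_eq_zero (hee_idem j) (hEE_ee j) (he0_EE j)
      (he0_smul_Δ i) hπ hexact
  · exact leftIdeal.exists_section_of_surjective he0_idem hπ
  · exact leftIdeal.exists_section_of_surjective he0_idem hπ
  · exact Submodule.injective_subtype _
  · exact deltaQuot_surjective
  · exact range_cycInc
  · exact deltaQuot_not_split (hee_idem j) (hEE_ee j) (Subalgebra.ne_zero_of_coe_eq_single (hEE j))
      (mul_mul_eq_zero_of_coe_eq_single hR (hEE j))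
  · exact ⟨(LinearEquiv.ofBijective _ (leftIdealToCycSub_bijective he0_idem (hEE_ee j) (he0_EE j)
      fun _ hz => eq_zero_of_mem_leftIdeal_of_mul_eq_zero he0 (hEE j) hz)).symm⟩

/-- For `i, j ∈ 𝒫 ∪ {0}` with not (`i = 0` and `j ∈ 𝒫`), every short exact sequence
`0 → Δ(i) → E → Δ(j) → 0` of finite-dimensional left `R`-modules splits; whereas for `j ∈ 𝒫`
the sequence `0 → K·E_{n+1,j} → Re_j → Δ(j) → 0` is exact, non-split, and has kernel
isomorphic to `Δ(0) = Re₀`. -/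
theorem stmt18 {K : Type} [Field K] [IsAlgClosed K] {n : ℕ} (hn : 1 ≤ n) (P : PosetOn n)
    (R : Subalgebra K (Matrix (Fin n ⊕ Unit) (Fin n ⊕ Unit) K))
    (hR : (R : Set (Matrix (Fin n ⊕ Unit) (Fin n ⊕ Unit) K)) = RSet K P)
    (e0 : R) (he0 : (e0 : Matrix (Fin n ⊕ Unit) (Fin n ⊕ Unit) K)
      = Matrix.single (Sum.inr ()) (Sum.inr ()) 1)
    (ee : Fin n → R) (hee : ∀ k, (ee k : Matrix (Fin n ⊕ Unit) (Fin n ⊕ Unit) K)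
      = Matrix.single (Sum.inl k) (Sum.inl k) 1)
    (EE : Fin n → R) (hEE : ∀ k, (EE k : Matrix (Fin n ⊕ Unit) (Fin n ⊕ Unit) K)
      = Matrix.single (Sum.inr ()) (Sum.inl k) 1) :
    -- every short exact sequence `0 → Δ(i) → E → Δ(j) → 0` with `i, j ∈ 𝒫` splits
    (∀ i j : Fin n, ∀ (E : Type) (_ : AddCommGroup E) (_ : Module K E) (_ : Module R E)
      (_ : IsScalarTower K R E) (_ : FiniteDimensional K E)
      (ι : DeltaGen R (ee i) (EE i) →ₗ[R] E) (π : E →ₗ[R] DeltaGen R (ee j) (EE j)),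
      Function.Injective ι → Function.Surjective π → LinearMap.range ι = LinearMap.ker π →
      ∃ s : DeltaGen R (ee j) (EE j) →ₗ[R] E, π ∘ₗ s = LinearMap.id) ∧
    -- every short exact sequence `0 → Δ(i) → E → Δ(0) → 0` with `i ∈ 𝒫` splits
    (∀ i : Fin n, ∀ (E : Type) (_ : AddCommGroup E) (_ : Module K E) (_ : Module R E)
      (_ : IsScalarTower K R E) (_ : FiniteDimensional K E)
      (ι : DeltaGen R (ee i) (EE i) →ₗ[R] E) (π : E →ₗ[R] ↥(leftIdeal R e0)),
      Function.Injective ι → Function.Surjective π → LinearMap.range ι = LinearMap.ker π →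
      ∃ s : ↥(leftIdeal R e0) →ₗ[R] E, π ∘ₗ s = LinearMap.id) ∧
    -- every short exact sequence `0 → Δ(0) → E → Δ(0) → 0` splits
    (∀ (E : Type) (_ : AddCommGroup E) (_ : Module K E) (_ : Module R E)
      (_ : IsScalarTower K R E) (_ : FiniteDimensional K E)
      (ι : ↥(leftIdeal R e0) →ₗ[R] E) (π : E →ₗ[R] ↥(leftIdeal R e0)),
      Function.Injective ι → Function.Surjective π → LinearMap.range ι = LinearMap.ker π →
      ∃ s : ↥(leftIdeal R e0) →ₗ[R] E, π ∘ₗ s = LinearMap.id) ∧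
    -- for `j ∈ 𝒫` the sequence `0 → K·E_{n+1,j} → Re_j → Δ(j) → 0` is exact and non-split,
    -- with kernel isomorphic to `Δ(0) = Re₀`
    (∀ j : Fin n,
      Function.Injective (cycInc R (ee j) (EE j)) ∧
      Function.Surjective (deltaQuot R (ee j) (EE j)) ∧
      LinearMap.range (cycInc R (ee j) (EE j))
        = LinearMap.ker (deltaQuot R (ee j) (EE j)) ∧
      (¬ ∃ s : DeltaGen R (ee j) (EE j) →ₗ[R] ↥(leftIdeal R (ee j)),
        deltaQuot R (ee j) (EE j) ∘ₗ s = LinearMap.id) ∧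
      Nonempty (↥(cycSub R (ee j) (EE j)) ≃ₗ[R] ↥(leftIdeal R e0))) :=
  stmt18_general P R hR e0 he0 ee hee EE hEE
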